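/- In the formal power series ring ℚ⟦q⟧ one has the identity E₆ = C₂·(4C₂² − 3E₄), where E₄ = 1 + 240 Σ_{n≥1} σ₃(n)qⁿ, E₆ = 1 − 504 Σ_{n≥1} σ₅(n)qⁿ, and C₂ = 1 + 24 Σ_{n≥1} τ₂(n)qⁿ with τ₂(n) = Σ_{d∣n, 2∤d} d. -/

import Mathlib

/-!
Write `C₂ = 1 + 24 A`, `E₄ = 1 + 240 S₃` and `E₆ = 1 - 504 S₅`, where `A`, `S₃`, `S₅` (and
`V₃`, `V₅`, built from the even divisors only) are divisor-sum series `∑ₙ (∑_{d ∣ n} f d) qⁿ`.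
The identity is a linear consequence of three convolution identities, expressing `A²`, `A S₃`
and `A V₃` linearly through such series. These are proved by Liouville's elementary method: the
`n`-th coefficient of a product of two divisor-sum series is a sum over the solutions of
`a x + b y = n` in positive integers. The shear `(a, b, x, y) ↦ (a, b - a, x + y, y)` and the
swap `(a, b, x, y) ↦ (b, a, y, x)` carry the parts `x > y` and `x < y` of that sum onto the
parts `a < b` and `a > b`, so for a weight `w` solving Liouville's functional equation the
whole sum collapses onto the diagonal `x = y`, that is onto `∑_{d ∣ n} ∑_{a + b = d} w a b`,
whose inner sums are polynomials in `d` on each parity class.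
-/

/-- `σₖ(n) = Σ_{d ∣ n} dᵏ`, the sum of the `k`-th powers of the divisors of `n`. -/
def sigmaFn (k n : ℕ) : ℕ := ∑ d ∈ n.divisors, d ^ k

/-- `τ_N(n) = Σ_{d ∣ n, N ∤ d} d`, the sum of the divisors of `n` not divisible by `N`. -/
def tauFn (N n : ℕ) : ℕ := ∑ d ∈ n.divisors.filter (fun d => ¬ N ∣ d), d

/-- `E₄ = 1 + 240 Σ_{n≥1} σ₃(n) qⁿ ∈ ℚ⟦q⟧`. -/
noncomputable def E4Q : PowerSeries ℚ :=
  PowerSeries.mk fun n => if n = 0 then 1 else 240 * sigmaFn 3 n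

/-- `E₆ = 1 - 504 Σ_{n≥1} σ₅(n) qⁿ ∈ ℚ⟦q⟧`. -/
noncomputable def E6Q : PowerSeries ℚ :=
  PowerSeries.mk fun n => if n = 0 then 1 else -504 * sigmaFn 5 n

/-- `C₂ = 1 + 24 Σ_{n≥1} τ₂(n) qⁿ ∈ ℚ⟦q⟧`. -/
noncomputable def C2Q : PowerSeries ℚ :=
  PowerSeries.mk fun n => if n = 0 then 1 else 24 * tauFn 2 n

open Finset

noncomputable def divisorSeries (f : ℕ → ℚ) : PowerSeries ℚ :=
  PowerSeries.mk fun n => ∑ d ∈ n.divisors, f d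

lemma coeff_divisorSeries (f : ℕ → ℚ) (n : ℕ) :
    PowerSeries.coeff n (divisorSeries f) = ∑ d ∈ n.divisors, f d :=
  PowerSeries.coeff_mk _ _

lemma coeff_ofNat_mul (c : ℕ) [c.AtLeastTwo] (n : ℕ) (P : PowerSeries ℚ) :
    PowerSeries.coeff n ((no_index (OfNat.ofNat c) : PowerSeries ℚ) * P)
      = (OfNat.ofNat c : ℚ) * PowerSeries.coeff n P := by
  rw [← map_ofNat PowerSeries.C c, PowerSeries.coeff_C_mul]

def quadruples (n : ℕ) : Finset ((ℕ × ℕ) × (ℕ × ℕ)) :=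
  ((Icc 1 n ×ˢ Icc 1 n) ×ˢ (Icc 1 n ×ˢ Icc 1 n)).filter
    fun p => p.1.1 * p.2.1 + p.1.2 * p.2.2 = n

lemma mem_quadruples {n a b x y : ℕ} :
    ((a, b), (x, y)) ∈ quadruples n ↔ 0 < a ∧ 0 < b ∧ 0 < x ∧ 0 < y ∧ a * x + b * y = n := by
  simp only [quadruples, mem_filter, mem_product, mem_Icc]
  constructor
  · rintro ⟨⟨⟨⟨ha, -⟩, hb, -⟩, ⟨hx, -⟩, hy, -⟩, h⟩
    omega
  · rintro ⟨ha, hb, hx, hy, h⟩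
    have : a ≤ a * x ∧ b ≤ b * y ∧ x ≤ a * x ∧ y ≤ b * y :=
      ⟨Nat.le_mul_of_pos_right a hx, Nat.le_mul_of_pos_right b hy,
        Nat.le_mul_of_pos_left x ha, Nat.le_mul_of_pos_left y hb⟩
    omega

lemma coeff_divisorSeries_mul (f h : ℕ → ℚ) (n : ℕ) :
    PowerSeries.coeff n (divisorSeries f * divisorSeries h)
      = ∑ p ∈ quadruples n, f p.1.1 * h p.1.2 := by
  have hdiv (g : ℕ → ℚ) (m : ℕ) : ∑ d ∈ m.divisors, g d = ∑ q ∈ m.divisorsAntidiagonal, g q.1 :=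
    (Nat.sum_divisorsAntidiagonal fun d _ => g d).symm
  simp only [PowerSeries.coeff_mul, coeff_divisorSeries, hdiv, sum_mul_sum, ← sum_product']
  rw [sum_sigma']
  refine sum_nbij' (fun q => ((q.2.1.1, q.2.2.1), (q.2.1.2, q.2.2.2)))
    (fun p => ⟨(p.1.1 * p.2.1, p.1.2 * p.2.2), ((p.1.1, p.2.1), (p.1.2, p.2.2))⟩)
    ?_ ?_ ?_ (fun _ _ => rfl) (fun _ _ => rfl)
  · rintro ⟨⟨i, j⟩, ⟨a, x⟩, ⟨b, y⟩⟩ hq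
    simp only [mem_sigma, HasAntidiagonal.mem_antidiagonal, mem_product,
      Nat.mem_divisorsAntidiagonal] at hq
    obtain ⟨hij, ⟨rfl, hi⟩, rfl, hj⟩ := hq
    simp only [mem_quadruples]
    exact ⟨Nat.pos_of_ne_zero (left_ne_zero_of_mul hi),
      Nat.pos_of_ne_zero (left_ne_zero_of_mul hj), Nat.pos_of_ne_zero (right_ne_zero_of_mul hi),
      Nat.pos_of_ne_zero (right_ne_zero_of_mul hj), hij⟩
  · rintro ⟨⟨a, b⟩, x, y⟩ hp
    simp only [mem_quadruples] at hp
    obtain ⟨ha, hb, hx, hy, h⟩ := hp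
    simp only [mem_sigma, HasAntidiagonal.mem_antidiagonal, mem_product,
      Nat.mem_divisorsAntidiagonal, true_and]
    exact ⟨h, by positivity, by positivity⟩
  · rintro ⟨⟨i, j⟩, ⟨a, x⟩, ⟨b, y⟩⟩ hq
    simp only [mem_sigma, mem_product, Nat.mem_divisorsAntidiagonal] at hq
    obtain ⟨-, ⟨rfl, -⟩, rfl, -⟩ := hq
    rfl

lemma sum_quadruples_swap (n : ℕ) (F : (ℕ × ℕ) × (ℕ × ℕ) → ℚ) :
    ∑ p ∈ quadruples n, F p = ∑ p ∈ quadruples n, F (p.1.swap, p.2.swap) := by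
  refine sum_nbij' (fun p => (p.1.swap, p.2.swap)) (fun p => (p.1.swap, p.2.swap))
    ?_ ?_ (fun _ _ => rfl) (fun _ _ => rfl) (fun _ _ => rfl) <;>
  · rintro ⟨⟨a, b⟩, x, y⟩ hp
    simp only [Prod.swap_prod_mk, mem_quadruples] at hp ⊢
    omega

lemma sum_quadruples_shear (n : ℕ) (F : (ℕ × ℕ) × (ℕ × ℕ) → ℚ) :
    ∑ p ∈ quadruples n, (if p.2.2 < p.2.1 then F p else 0)
      = ∑ p ∈ quadruples n,
          (if p.1.1 < p.1.2 then F ((p.1.1, p.1.2 - p.1.1), (p.2.1 + p.2.2, p.2.2)) else 0) := by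
  rw [← sum_filter, ← sum_filter]
  refine sum_nbij' (fun p => ((p.1.1, p.1.1 + p.1.2), (p.2.1 - p.2.2, p.2.2)))
    (fun p => ((p.1.1, p.1.2 - p.1.1), (p.2.1 + p.2.2, p.2.2))) ?_ ?_ ?_ ?_ ?_
  · rintro ⟨⟨a, b⟩, x, y⟩ hp
    simp only [mem_filter, mem_quadruples] at hp ⊢
    obtain ⟨⟨ha, hb, hx, hy, h⟩, hlt⟩ := hp
    obtain ⟨c, rfl⟩ := Nat.exists_eq_add_of_lt hlt
    refine ⟨⟨ha, by omega, by omega, hy, ?_⟩, by omega⟩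
    rw [show y + c + 1 - y = c + 1 by omega, ← h]
    ring
  · rintro ⟨⟨a, b⟩, x, y⟩ hp
    simp only [mem_filter, mem_quadruples] at hp ⊢
    obtain ⟨⟨ha, hb, hx, hy, h⟩, hlt⟩ := hp
    obtain ⟨c, rfl⟩ := Nat.exists_eq_add_of_lt hlt
    refine ⟨⟨ha, by omega, by omega, hy, ?_⟩, by omega⟩
    rw [show a + c + 1 - a = c + 1 by omega, ← h]
    ring
  · rintro ⟨⟨a, b⟩, x, y⟩ hp
    simp only [mem_filter, mem_quadruples] at hp
    simp only [Prod.mk.injEq, true_and, and_true]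
    omega
  · rintro ⟨⟨a, b⟩, x, y⟩ hp
    simp only [mem_filter, mem_quadruples] at hp
    simp only [Prod.mk.injEq, true_and, and_true]
    omega
  · rintro ⟨⟨a, b⟩, x, y⟩ hp
    simp only [mem_filter, mem_quadruples] at hp
    simp only [Nat.add_sub_cancel_left, Nat.sub_add_cancel hp.2.le]

lemma sum_quadruples_diag (n : ℕ) (w : ℕ → ℕ → ℚ) :
    ∑ p ∈ quadruples n, (if p.2.1 = p.2.2 then w p.1.1 p.1.2 else 0)
      = ∑ d ∈ n.divisors, ∑ a ∈ Ioo 0 d, w a (d - a) := by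
  rw [← sum_filter, ← Nat.sum_divisorsAntidiagonal (fun d _ => ∑ a ∈ Ioo 0 d, w a (d - a)),
    sum_sigma']
  refine sum_nbij' (fun p => ⟨(p.1.1 + p.1.2, p.2.1), p.1.1⟩)
    (fun q => ((q.2, q.1.1 - q.2), (q.1.2, q.1.2))) ?_ ?_ ?_ ?_ ?_
  · rintro ⟨⟨a, b⟩, x, y⟩ hp
    simp only [mem_filter, mem_quadruples] at hp
    obtain ⟨⟨ha, hb, hx, hy, h⟩, rfl⟩ := hp
    simp only [mem_sigma, Nat.mem_divisorsAntidiagonal, mem_Ioo]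
    exact ⟨⟨by rw [← h]; ring, by have := Nat.mul_pos ha hx; omega⟩, ha, by omega⟩
  · rintro ⟨⟨d, x⟩, a⟩ hq
    simp only [mem_sigma, Nat.mem_divisorsAntidiagonal, mem_Ioo] at hq
    obtain ⟨⟨rfl, hn⟩, ha, had⟩ := hq
    simp only [mem_filter, mem_quadruples, and_true]
    refine ⟨ha, by omega, Nat.pos_of_ne_zero (right_ne_zero_of_mul hn),
      Nat.pos_of_ne_zero (right_ne_zero_of_mul hn), ?_⟩
    rw [← add_mul, Nat.add_sub_cancel' had.le]
  · rintro ⟨⟨a, b⟩, x, y⟩ hp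
    simp only [mem_filter, mem_quadruples] at hp
    obtain ⟨-, rfl⟩ := hp
    simp
  · rintro ⟨⟨d, x⟩, a⟩ hq
    simp only [mem_sigma, Nat.mem_divisorsAntidiagonal, mem_Ioo] at hq
    simp [Nat.add_sub_cancel' hq.2.2.le]
  · rintro ⟨⟨a, b⟩, x, y⟩ -
    simp

def liouvilleDiff (w : ℕ → ℕ → ℚ) (a b : ℕ) : ℚ :=
  w a b - (if a < b then w a (b - a) else 0) - (if b < a then w (a - b) b else 0)

theorem sum_quadruples_liouvilleDiff (w : ℕ → ℕ → ℚ) (n : ℕ) :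
    ∑ p ∈ quadruples n, liouvilleDiff w p.1.1 p.1.2
      = ∑ d ∈ n.divisors, ∑ a ∈ Ioo 0 d, w a (d - a) := by
  have hsplit : ∑ p ∈ quadruples n, w p.1.1 p.1.2
      = ∑ p ∈ quadruples n, (if p.2.1 < p.2.2 then w p.1.1 p.1.2 else 0)
        + ∑ p ∈ quadruples n, (if p.2.1 = p.2.2 then w p.1.1 p.1.2 else 0)
        + ∑ p ∈ quadruples n, (if p.2.2 < p.2.1 then w p.1.1 p.1.2 else 0) := by
    rw [← sum_add_distrib, ← sum_add_distrib]
    refine sum_congr rfl fun p _ => ?_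
    rcases lt_trichotomy p.2.1 p.2.2 with h | h | h
    · simp [h, h.ne, h.not_gt]
    · simp [h]
    · simp [h, h.ne', h.not_gt]
  have hlt : ∑ p ∈ quadruples n, (if p.2.1 < p.2.2 then w p.1.1 p.1.2 else 0)
      = ∑ p ∈ quadruples n, (if p.1.2 < p.1.1 then w (p.1.1 - p.1.2) p.1.2 else 0) := by
    calc _ = ∑ p ∈ quadruples n, (if p.2.2 < p.2.1 then w p.1.2 p.1.1 else 0) :=
          sum_quadruples_swap n _
      _ = ∑ p ∈ quadruples n, (if p.1.1 < p.1.2 then w (p.1.2 - p.1.1) p.1.1 else 0) :=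
          sum_quadruples_shear n fun p => w p.1.2 p.1.1
      _ = _ := sum_quadruples_swap n _
  simp only [liouvilleDiff, sum_sub_distrib]
  rw [hsplit, hlt, sum_quadruples_shear n fun p => w p.1.1 p.1.2, sum_quadruples_diag]
  ring

def IsLiouvilleWeight (f h : ℕ → ℚ) (w : ℕ → ℕ → ℚ) : Prop :=
  (∀ a c, 0 < a → 0 < c →
    w a (a + c) - w a c + (w (a + c) a - w c a) = f a * h (a + c) + f (a + c) * h a) ∧
  ∀ a, 0 < a → w a a = f a * h a

lemma IsLiouvilleWeight.liouvilleDiff_add_liouvilleDiff {f h : ℕ → ℚ} {w : ℕ → ℕ → ℚ}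
    (hw : IsLiouvilleWeight f h w) {a b : ℕ} (ha : 0 < a) (hb : 0 < b) :
    liouvilleDiff w a b + liouvilleDiff w b a = f a * h b + f b * h a := by
  rcases lt_trichotomy a b with hab | rfl | hab
  · obtain ⟨c, hc, rfl⟩ : ∃ c, 0 < c ∧ b = a + c := ⟨b - a, by omega, by omega⟩
    have := hw.1 a c ha hc
    simp only [liouvilleDiff, if_pos hab, if_neg hab.not_gt, add_tsub_cancel_left]
    linear_combination this
  · simp only [liouvilleDiff, lt_irrefl, if_false, hw.2 a ha]
    ring
  · obtain ⟨c, hc, rfl⟩ : ∃ c, 0 < c ∧ a = b + c := ⟨a - b, by omega, by omega⟩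
    have := hw.1 b c hb hc
    simp only [liouvilleDiff, if_pos hab, if_neg hab.not_gt, add_tsub_cancel_left]
    linear_combination this

theorem divisorSeries_mul_eq {f h : ℕ → ℚ} {w : ℕ → ℕ → ℚ} (hw : IsLiouvilleWeight f h w) :
    divisorSeries f * divisorSeries h = divisorSeries fun d => ∑ a ∈ Ioo 0 d, w a (d - a) := by
  ext n
  rw [coeff_divisorSeries_mul, coeff_divisorSeries, ← sum_quadruples_liouvilleDiff]
  have hswap (g : ℕ → ℕ → ℚ) : ∑ p ∈ quadruples n, g p.1.1 p.1.2
      = ∑ p ∈ quadruples n, g p.1.2 p.1.1 := sum_quadruples_swap n _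
  -- Liouville's equation only determines `liouvilleDiff w` up to the swap `(a, b) ↦ (b, a)`
  have hsymm : ∑ p ∈ quadruples n, (f p.1.1 * h p.1.2 + f p.1.2 * h p.1.1)
      = ∑ p ∈ quadruples n, (liouvilleDiff w p.1.1 p.1.2 + liouvilleDiff w p.1.2 p.1.1) := by
    refine sum_congr rfl fun ⟨⟨a, b⟩, x, y⟩ hp => ?_
    rw [mem_quadruples] at hp
    exact (hw.liouvilleDiff_add_liouvilleDiff hp.1 hp.2.1).symm
  rw [sum_add_distrib, sum_add_distrib, ← hswap fun a b => f a * h b,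
    ← hswap (liouvilleDiff w)] at hsymm
  linarith

lemma sum_range_two_mul (f : ℕ → ℚ) (e : ℕ) :
    ∑ a ∈ range (2 * e), f a = ∑ k ∈ range e, (f (2 * k) + f (2 * k + 1)) := by
  induction e with
  | zero => simp
  | succ e ih => rw [mul_add, mul_one, sum_range_succ, sum_range_succ, ih, sum_range_succ]; ring

lemma sum_Ioo_zero_eq_sum_range {f : ℕ → ℚ} (hf : f 0 = 0) (d : ℕ) :
    ∑ a ∈ Ioo 0 d, f a = ∑ a ∈ range d, f a := by
  refine sum_subset (fun a ha => ?_) fun a had ha => ?_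
  · simp only [mem_Ioo, mem_range] at ha ⊢
    omega
  · simp only [mem_Ioo, mem_range, not_and, not_lt] at had ha
    rw [show a = 0 by omega, hf]

lemma sum_range_natCast_pow (e : ℕ) :
    ∑ k ∈ range e, (k : ℚ) = ((e : ℚ) ^ 2 - e) / 2 ∧
    ∑ k ∈ range e, (k : ℚ) ^ 2 = (2 * (e : ℚ) ^ 3 - 3 * (e : ℚ) ^ 2 + e) / 6 ∧
    ∑ k ∈ range e, (k : ℚ) ^ 3 = ((e : ℚ) ^ 4 - 2 * (e : ℚ) ^ 3 + (e : ℚ) ^ 2) / 4 ∧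
    ∑ k ∈ range e, (k : ℚ) ^ 4
      = (6 * (e : ℚ) ^ 5 - 15 * (e : ℚ) ^ 4 + 10 * (e : ℚ) ^ 3 - e) / 30 := by
  induction e with
  | zero => simp
  | succ e ih =>
    obtain ⟨h1, h2, h3, h4⟩ := ih
    simp only [sum_range_succ, h1, h2, h3, h4]
    push_cast
    exact ⟨by ring, by ring, by ring, by ring⟩

def oddInd (a : ℕ) : ℚ := if a % 2 = 1 then 1 else 0

def oddPow (k d : ℕ) : ℚ := oddInd d * (d : ℚ) ^ k

def evenPow (k d : ℕ) : ℚ := (1 - oddInd d) * (d : ℚ) ^ k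

def oddOddWeight (a b : ℕ) : ℚ :=
  oddInd a * ((b : ℚ) ^ 2 + oddInd b * a * b) / 2

def oddCubeWeight (a b : ℕ) : ℚ :=
  oddInd a * ((b : ℚ) ^ 4 + 2 * a * b ^ 3 + oddInd b * a ^ 2 * b ^ 2) / 4
    + (1 - oddInd a) * oddInd b * a ^ 2 * b ^ 2 / 2

def oddEvenCubeWeight (a b : ℕ) : ℚ :=
  oddInd a * ((b : ℚ) ^ 4 + 4 * (1 - oddInd b) * a * b ^ 3 - oddInd b * a ^ 2 * b ^ 2) / 8
    + (1 - oddInd a) * oddInd b * a ^ 2 * b ^ 2 / 2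

lemma isLiouvilleWeight_oddOddWeight : IsLiouvilleWeight (oddPow 1) (oddPow 1) oddOddWeight := by
  refine ⟨fun a c _ _ => ?_, fun a _ => ?_⟩
  · rcases Nat.mod_two_eq_zero_or_one a with ha | ha <;>
    rcases Nat.mod_two_eq_zero_or_one c with hc | hc <;>
    simp [oddOddWeight, oddPow, oddInd, Nat.add_mod, ha, hc] <;> ring
  · rcases Nat.mod_two_eq_zero_or_one a with ha | ha <;> simp [oddOddWeight, oddPow, oddInd, ha]
    ring

lemma isLiouvilleWeight_oddCubeWeight :
    IsLiouvilleWeight (oddPow 1) (fun d => (d : ℚ) ^ 3) oddCubeWeight := by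
  refine ⟨fun a c _ _ => ?_, fun a _ => ?_⟩
  · rcases Nat.mod_two_eq_zero_or_one a with ha | ha <;>
    rcases Nat.mod_two_eq_zero_or_one c with hc | hc <;>
    simp [oddCubeWeight, oddPow, oddInd, Nat.add_mod, ha, hc] <;> ring
  · rcases Nat.mod_two_eq_zero_or_one a with ha | ha <;> simp [oddCubeWeight, oddPow, oddInd, ha]
    ring

lemma isLiouvilleWeight_oddEvenCubeWeight :
    IsLiouvilleWeight (oddPow 1) (evenPow 3) oddEvenCubeWeight := by
  refine ⟨fun a c _ _ => ?_, fun a _ => ?_⟩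
  · rcases Nat.mod_two_eq_zero_or_one a with ha | ha <;>
    rcases Nat.mod_two_eq_zero_or_one c with hc | hc <;>
    simp [oddEvenCubeWeight, oddPow, evenPow, oddInd, Nat.add_mod, ha, hc] <;> ring
  · rcases Nat.mod_two_eq_zero_or_one a with ha | ha <;>
      simp [oddEvenCubeWeight, oddPow, evenPow, oddInd, ha]
    ring

lemma sum_Ioo_oddOddWeight (d : ℕ) :
    ∑ a ∈ Ioo 0 d, oddOddWeight a (d - a)
      = if d % 2 = 1 then ((d : ℚ) ^ 3 - d) / 12 else (d : ℚ) ^ 3 / 8 := by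
  -- pairing `a = 2k` with `a = 2k + 1` fixes all parities; the pair sums are polynomials in `k`
  rw [sum_Ioo_zero_eq_sum_range (by simp [oddOddWeight, oddInd])]
  obtain ⟨e, rfl | rfl⟩ := Nat.even_or_odd' d <;>
  · obtain ⟨h1, h2, -, -⟩ := sum_range_natCast_pow e
    simp (disch := (try simp only [mem_range] at *); omega) only [sum_range_succ,
      sum_range_two_mul, oddOddWeight, oddInd, if_pos, if_neg, if_true, Nat.cast_sub, Nat.cast_add,
      Nat.cast_mul, Nat.cast_one, Nat.cast_ofNat, add_tsub_cancel_left]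
    ring_nf
    simp only [sum_add_distrib, sum_sub_distrib, sum_neg_distrib, ← sum_mul, ← mul_sum, sum_const,
      card_range, nsmul_eq_mul, h1, h2]
    ring

lemma sum_Ioo_oddCubeWeight (d : ℕ) :
    ∑ a ∈ Ioo 0 d, oddCubeWeight a (d - a)
      = if d % 2 = 1 then (11 * (d : ℚ) ^ 5 - 10 * (d : ℚ) ^ 3 - d) / 240
        else ((d : ℚ) ^ 5 - (d : ℚ) ^ 3) / 24 := by
  rw [sum_Ioo_zero_eq_sum_range (by simp [oddCubeWeight, oddInd])]
  obtain ⟨e, rfl | rfl⟩ := Nat.even_or_odd' d <;>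
  · obtain ⟨h1, h2, h3, h4⟩ := sum_range_natCast_pow e
    simp (disch := (try simp only [mem_range] at *); omega) only [sum_range_succ,
      sum_range_two_mul, oddCubeWeight, oddInd, if_pos, if_neg, if_true, Nat.cast_sub, Nat.cast_add,
      Nat.cast_mul, Nat.cast_one, Nat.cast_ofNat, add_tsub_cancel_left]
    ring_nf
    simp only [sum_add_distrib, sum_sub_distrib, ← sum_mul, ← mul_sum, sum_const, card_range,
      nsmul_eq_mul, h1, h2, h3, h4]
    ring

lemma sum_Ioo_oddEvenCubeWeight (d : ℕ) :
    ∑ a ∈ Ioo 0 d, oddEvenCubeWeight a (d - a)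
      = if d % 2 = 1 then ((d : ℚ) ^ 5 - d) / 30 else ((d : ℚ) ^ 5 - 4 * (d : ℚ) ^ 3) / 96 := by
  rw [sum_Ioo_zero_eq_sum_range (by simp [oddEvenCubeWeight, oddInd])]
  obtain ⟨e, rfl | rfl⟩ := Nat.even_or_odd' d <;>
  · obtain ⟨h1, h2, h3, h4⟩ := sum_range_natCast_pow e
    simp (disch := (try simp only [mem_range] at *); omega) only [sum_range_succ,
      sum_range_two_mul, oddEvenCubeWeight, oddInd, if_pos, if_neg, if_true, Nat.cast_sub,
      Nat.cast_add, Nat.cast_mul, Nat.cast_one, Nat.cast_ofNat, add_tsub_cancel_left]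
    ring_nf
    simp only [sum_add_distrib, sum_sub_distrib, ← sum_mul, ← mul_sum, sum_const, card_range,
      nsmul_eq_mul, h1, h2, h3, h4]
    ring

lemma divisorSeries_oddPow_one_sq :
    24 * divisorSeries (oddPow 1) ^ 2 + 2 * divisorSeries (oddPow 1)
      = 2 * divisorSeries (fun d => (d : ℚ) ^ 3) + divisorSeries (evenPow 3) := by
  rw [sq, divisorSeries_mul_eq isLiouvilleWeight_oddOddWeight]
  ext n
  simp only [map_add, coeff_ofNat_mul, coeff_divisorSeries, mul_sum, ← sum_add_distrib]
  refine sum_congr rfl fun d _ => ?_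
  rw [← mul_sum, sum_Ioo_oddOddWeight]
  rcases Nat.mod_two_eq_zero_or_one d with h | h <;> simp [h, oddPow, evenPow, oddInd] <;> ring

lemma divisorSeries_oddPow_one_mul_cube :
    240 * (divisorSeries (oddPow 1) * divisorSeries (fun d => (d : ℚ) ^ 3))
        + divisorSeries (oddPow 1) + 10 * divisorSeries (fun d => (d : ℚ) ^ 3)
        + divisorSeries (evenPow 5)
      = 11 * divisorSeries (fun d => (d : ℚ) ^ 5) := by
  rw [divisorSeries_mul_eq isLiouvilleWeight_oddCubeWeight]
  ext n
  simp only [map_add, coeff_ofNat_mul, coeff_divisorSeries, mul_sum, ← sum_add_distrib]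
  refine sum_congr rfl fun d _ => ?_
  rw [← mul_sum, sum_Ioo_oddCubeWeight]
  rcases Nat.mod_two_eq_zero_or_one d with h | h <;> simp [h, oddPow, evenPow, oddInd] <;> ring

lemma divisorSeries_oddPow_one_mul_evenPow_three :
    480 * (divisorSeries (oddPow 1) * divisorSeries (evenPow 3)) + 16 * divisorSeries (oddPow 1)
        + 20 * divisorSeries (evenPow 3) + 11 * divisorSeries (evenPow 5)
      = 16 * divisorSeries (fun d => (d : ℚ) ^ 5) := by
  rw [divisorSeries_mul_eq isLiouvilleWeight_oddEvenCubeWeight]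
  ext n
  simp only [map_add, coeff_ofNat_mul, coeff_divisorSeries, mul_sum, ← sum_add_distrib]
  refine sum_congr rfl fun d _ => ?_
  rw [← mul_sum, sum_Ioo_oddEvenCubeWeight]
  rcases Nat.mod_two_eq_zero_or_one d with h | h <;> simp [h, oddPow, evenPow, oddInd] <;> ring

lemma natCast_tauFn_two (n : ℕ) : (tauFn 2 n : ℚ) = ∑ d ∈ n.divisors, oddPow 1 d := by
  rw [tauFn, Nat.cast_sum, sum_filter]
  refine sum_congr rfl fun d _ => ?_
  rcases Nat.mod_two_eq_zero_or_one d with h | h <;>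
    simp [oddPow, oddInd, Nat.dvd_iff_mod_eq_zero, h]

lemma natCast_sigmaFn (k n : ℕ) : (sigmaFn k n : ℚ) = ∑ d ∈ n.divisors, (d : ℚ) ^ k := by
  simp [sigmaFn]

lemma mk_eq_one_add_divisorSeries (c : ℚ) (u : ℕ → ℕ) (f : ℕ → ℚ)
    (hu : ∀ n, (u n : ℚ) = ∑ d ∈ n.divisors, f d) :
    PowerSeries.mk (fun n => if n = 0 then 1 else c * u n)
      = 1 + PowerSeries.C c * divisorSeries f := by
  ext n
  rcases eq_or_ne n 0 with rfl | hn
  · simp [divisorSeries]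
  · simp [coeff_divisorSeries, hn, hu]

lemma C2Q_eq_one_add : C2Q = 1 + 24 * divisorSeries (oddPow 1) := by
  rw [C2Q, mk_eq_one_add_divisorSeries _ _ _ natCast_tauFn_two, map_ofNat]

lemma E4Q_eq_one_add : E4Q = 1 + 240 * divisorSeries (fun d => (d : ℚ) ^ 3) := by
  rw [E4Q, mk_eq_one_add_divisorSeries _ _ _ (natCast_sigmaFn 3), map_ofNat]

lemma E6Q_eq_one_sub : E6Q = 1 - 504 * divisorSeries (fun d => (d : ℚ) ^ 5) := by
  rw [E6Q, mk_eq_one_add_divisorSeries _ _ _ (natCast_sigmaFn 5), map_neg, map_ofNat, neg_mul,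
    ← sub_eq_add_neg]

/-- In `ℚ⟦q⟧` one has `E₆ = C₂·(4C₂² − 3E₄)`. -/
theorem E6_eq_C2_mul : E6Q = C2Q * (4 * C2Q ^ 2 - 3 * E4Q) := by
  have h5 : (5 : PowerSeries ℚ) ≠ 0 := fun h => by
    simpa [map_ofNat] using congrArg PowerSeries.constantCoeff h
  -- the combination of the three convolution identities below has denominators `5`
  refine mul_left_cancel₀ h5 ?_
  rw [C2Q_eq_one_add, E4Q_eq_one_add, E6Q_eq_one_sub]
  linear_combination (-480 - 11520 * divisorSeries (oddPow 1)) * divisorSeries_oddPow_one_sq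
    + 264 * divisorSeries_oddPow_one_mul_cube - 24 * divisorSeries_oddPow_one_mul_evenPow_three
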